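/- arXiv:2603.08253 — 4 statements merged into one kernel-verified Lean document; each statement's English description precedes it below -/
import Mathlib

section
/- Let A, B, η_A, η_B be 2×2 complex matrices satisfying the generalized Legendre relations η_Aᵀ·B − Aᵀ·η_B = 2πi·I and the symmetry conditions (η_Aᵀ·A)ᵀ = η_Aᵀ·A, (η_Bᵀ·B)ᵀ = η_Bᵀ·B, (η_A·η_Bᵀ)ᵀ = η_A·η_Bᵀ. Then B·η_Aᵀ − A·η_Bᵀ = 2πi·I. -/
open Matrix

theorem stmt1 (A B ηA ηB : Matrix (Fin 2) (Fin 2) ℂ)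
    (hLegendre : ηAᵀ * B - Aᵀ * ηB = (2 * Real.pi * Complex.I : ℂ) • (1 : Matrix (Fin 2) (Fin 2) ℂ))
    (hA : (ηAᵀ * A)ᵀ = ηAᵀ * A)
    (hB : (ηBᵀ * B)ᵀ = ηBᵀ * B)
    (hAB : (ηA * ηBᵀ)ᵀ = ηA * ηBᵀ) :
    B * ηAᵀ - A * ηBᵀ = (2 * Real.pi * Complex.I : ℂ) • (1 : Matrix (Fin 2) (Fin 2) ℂ) := by
  set c : ℂ := 2 * Real.pi * Complex.I with hc
  have hc0 : c ≠ 0 := by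
    simp [hc, Real.pi_ne_zero, Complex.I_ne_zero, Complex.ofReal_ne_zero]
  -- transpose of the Legendre relation
  have hLegT : Bᵀ * ηA - ηBᵀ * A = c • (1 : Matrix (Fin 2) (Fin 2) ℂ) := by
    have := congrArg Matrix.transpose hLegendre
    simpa [Matrix.transpose_sub, Matrix.transpose_mul, Matrix.transpose_smul] using this
  have hA' : Aᵀ * ηA = ηAᵀ * A := by
    simpa [Matrix.transpose_mul] using hA
  have hB' : Bᵀ * ηB = ηBᵀ * B := by
    simpa [Matrix.transpose_mul] using hB
  set M : Matrix (Fin 2 ⊕ Fin 2) (Fin 2 ⊕ Fin 2) ℂ := Matrix.fromBlocks A B ηA ηB with hM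
  set N : Matrix (Fin 2 ⊕ Fin 2) (Fin 2 ⊕ Fin 2) ℂ :=
    Matrix.fromBlocks (-ηBᵀ) Bᵀ ηAᵀ (-Aᵀ) with hN
  have e11 : -ηBᵀ * A + Bᵀ * ηA = c • (1 : Matrix (Fin 2) (Fin 2) ℂ) := by
    rw [neg_mul, neg_add_eq_sub]; exact hLegT
  have e12 : -ηBᵀ * B + Bᵀ * ηB = 0 := by rw [neg_mul, hB', neg_add_cancel]
  have e21 : ηAᵀ * A + -Aᵀ * ηA = 0 := by rw [neg_mul, hA', add_neg_cancel]
  have e22 : ηAᵀ * B + -Aᵀ * ηB = c • (1 : Matrix (Fin 2) (Fin 2) ℂ) := by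
    rw [neg_mul, ← sub_eq_add_neg]; exact hLegendre
  have hNM : N * M = c • (1 : Matrix (Fin 2 ⊕ Fin 2) (Fin 2 ⊕ Fin 2) ℂ) := by
    rw [hN, hM, Matrix.fromBlocks_multiply, e11, e12, e21, e22, ← Matrix.fromBlocks_one,
      Matrix.fromBlocks_smul, smul_zero]
  have hinv : (c⁻¹ • N) * M = 1 := by
    rw [smul_mul, hNM, smul_smul, inv_mul_cancel₀ hc0, one_smul]
  have hMN : M * N = c • (1 : Matrix (Fin 2 ⊕ Fin 2) (Fin 2 ⊕ Fin 2) ℂ) := by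
    have h2 : M * (c⁻¹ • N) = 1 := mul_eq_one_comm.mp hinv
    calc M * N = c • (M * (c⁻¹ • N)) := by
          rw [Matrix.mul_smul, smul_smul, mul_inv_cancel₀ hc0, one_smul]
      _ = c • 1 := by rw [h2]
  have hblock := congrArg Matrix.toBlocks₁₁ hMN
  rw [hM, hN, Matrix.fromBlocks_multiply, ← Matrix.fromBlocks_one, Matrix.fromBlocks_smul,
    Matrix.toBlocks_fromBlocks₁₁, Matrix.toBlocks_fromBlocks₁₁] at hblock
  rw [sub_eq_add_neg, ← Matrix.mul_neg, add_comm]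
  exact hblock
end

section
/- Suppose φ : ℂ² → ℂ is an even entire function with Taylor expansion φ(z) = z₁² + a·z₁⁴ + b·z₁³z₂ + c·z₁²z₂² + d·z₁z₂³ + e·z₂⁴ + o(|z|⁴) at the origin, and suppose there exist even entire functions φ₂₂, φ₁₂ with φ₂₂(z) = 2z₁z₂ + o(|z|²) and φ₁₂(z) = −z₂² + o(|z|²) such that φ·∂²φ/∂z₂² − (∂φ/∂z₂)² = −(f₅/2)·φ·φ₂₂ − f₆·(φ₂₂² + φ·φ₁₂) and φ·∂²φ/∂z₁∂z₂ − (∂φ/∂z₁)·(∂φ/∂z₂) = −(f₅/2)·φ·φ₁₂ − f₆·φ₁₂·φ₂₂ for complex constants f₅, f₆. Then b = c = 0, d = −f₅/6, and e = −f₆/4. -/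
open Asymptotics Filter

/-- Partial derivative in the first variable of a function on ℂ². -/
noncomputable def pd1 (f : ℂ × ℂ → ℂ) (z : ℂ × ℂ) : ℂ := deriv (fun w => f (w, z.2)) z.1

/-- Partial derivative in the second variable of a function on ℂ². -/
noncomputable def pd2 (f : ℂ × ℂ → ℂ) (z : ℂ × ℂ) : ℂ := deriv (fun w => f (z.1, w)) z.2

section AuxLemmas

open Metric Real

/-! ### Elementary asymptotic helpers -/

lemma pow_O {E : Type*} [NormedAddCommGroup E] {m n : ℕ} (h : n ≤ m) :
    (fun z : E => ‖z‖ ^ m) =O[nhds 0] fun z => ‖z‖ ^ n := by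
  rw [Asymptotics.isBigO_iff]
  refine ⟨1, ?_⟩
  filter_upwards [Metric.closedBall_mem_nhds (0 : E) one_pos] with z hz
  have hz1 : ‖z‖ ≤ 1 := by simpa [dist_zero_right] using hz
  have : ‖z‖ ^ m ≤ ‖z‖ ^ n := pow_le_pow_of_le_one (norm_nonneg z) hz1 h
  simpa [_root_.abs_of_nonneg (pow_nonneg (norm_nonneg z) _)] using this

lemma pow_o {E : Type*} [NormedAddCommGroup E] {m n : ℕ} (h : n < m) :
    (fun z : E => ‖z‖ ^ m) =o[nhds 0] fun z : E => ‖z‖ ^ n := by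
  rw [Asymptotics.isLittleO_iff]
  intro c hc
  filter_upwards [Metric.closedBall_mem_nhds (0 : E) (lt_min hc one_pos)] with z hz
  have hz' : ‖z‖ ≤ min c 1 := by simpa [dist_zero_right] using hz
  have hz1 : ‖z‖ ≤ 1 := hz'.trans (min_le_right _ _)
  have hzc : ‖z‖ ≤ c := hz'.trans (min_le_left _ _)
  have h1 : ‖z‖ ^ m ≤ ‖z‖ ^ (n + 1) := pow_le_pow_of_le_one (norm_nonneg z) hz1 h
  have h2 : ‖z‖ ^ (n + 1) ≤ c * ‖z‖ ^ n := by
    rw [pow_succ, mul_comm]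
    exact mul_le_mul_of_nonneg_right hzc (pow_nonneg (norm_nonneg z) n)
  calc ‖‖z‖ ^ m‖ = ‖z‖ ^ m := by
        simp [_root_.abs_of_nonneg (pow_nonneg (norm_nonneg z) _)]
    _ ≤ c * ‖z‖ ^ n := h1.trans h2
    _ = c * ‖‖z‖ ^ n‖ := by simp [_root_.abs_of_nonneg (pow_nonneg (norm_nonneg z) _)]

lemma mon_O (i j : ℕ) :
    (fun z : ℂ × ℂ => z.1 ^ i * z.2 ^ j) =O[nhds 0] fun z => ‖z‖ ^ (i + j) := by
  refine Asymptotics.isBigO_of_le _ fun z => ?_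
  calc ‖z.1 ^ i * z.2 ^ j‖ = ‖z.1‖ ^ i * ‖z.2‖ ^ j := by simp [norm_mul, norm_pow]
    _ ≤ ‖z‖ ^ i * ‖z‖ ^ j :=
        mul_le_mul (pow_le_pow_left₀ (norm_nonneg _) (norm_fst_le z) i)
          (pow_le_pow_left₀ (norm_nonneg _) (norm_snd_le z) j)
          (pow_nonneg (norm_nonneg _) _) (pow_nonneg (norm_nonneg _) _)
    _ = ‖z‖ ^ (i + j) := (pow_add _ _ _).symm
    _ ≤ ‖‖z‖ ^ (i + j)‖ := le_abs_self _

lemma mono_O' (k : ℂ) (i j n : ℕ) (h : n ≤ i + j) :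
    (fun z : ℂ × ℂ => k * (z.1 ^ i * z.2 ^ j)) =O[nhds 0] fun z => ‖z‖ ^ n :=
  ((mon_O i j).const_mul_left k).trans (pow_O h)

lemma O_mul_o {f g : ℂ × ℂ → ℂ} {m n k : ℕ}
    (hf : f =O[nhds 0] fun z : ℂ × ℂ => ‖z‖ ^ m)
    (hg : g =o[nhds 0] fun z : ℂ × ℂ => ‖z‖ ^ n) (hk : k ≤ m + n) :
    (fun z => f z * g z) =o[nhds 0] fun z : ℂ × ℂ => ‖z‖ ^ k := by
  have h1 := hf.mul_isLittleO hg
  have h2 : (fun z : ℂ × ℂ => ‖z‖ ^ m * ‖z‖ ^ n) = fun z : ℂ × ℂ => ‖z‖ ^ (m + n) := by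
    funext z; rw [pow_add]
  rw [h2] at h1
  exact h1.trans_isBigO (pow_O hk)

lemma o_mul_O {f g : ℂ × ℂ → ℂ} {m n k : ℕ}
    (hf : f =o[nhds 0] fun z : ℂ × ℂ => ‖z‖ ^ m)
    (hg : g =O[nhds 0] fun z : ℂ × ℂ => ‖z‖ ^ n) (hk : k ≤ m + n) :
    (fun z => f z * g z) =o[nhds 0] fun z : ℂ × ℂ => ‖z‖ ^ k := by
  have h1 := hf.mul_isBigO hg
  have h2 : (fun z : ℂ × ℂ => ‖z‖ ^ m * ‖z‖ ^ n) = fun z : ℂ × ℂ => ‖z‖ ^ (m + n) := by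
    funext z; rw [pow_add]
  rw [h2] at h1
  exact h1.trans_isBigO (pow_O hk)

lemma o_mul_o {f g : ℂ × ℂ → ℂ} {m n k : ℕ}
    (hf : f =o[nhds 0] fun z : ℂ × ℂ => ‖z‖ ^ m)
    (hg : g =o[nhds 0] fun z : ℂ × ℂ => ‖z‖ ^ n) (hk : k ≤ m + n) :
    (fun z => f z * g z) =o[nhds 0] fun z : ℂ × ℂ => ‖z‖ ^ k :=
  O_mul_o hf.isBigO hg hk

lemma O_mul_O {f g : ℂ × ℂ → ℂ} {m n k : ℕ}
    (hf : f =O[nhds 0] fun z : ℂ × ℂ => ‖z‖ ^ m)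
    (hg : g =O[nhds 0] fun z : ℂ × ℂ => ‖z‖ ^ n) (hk : k < m + n) :
    (fun z => f z * g z) =o[nhds 0] fun z : ℂ × ℂ => ‖z‖ ^ k := by
  have h1 := hf.mul hg
  have h2 : (fun z : ℂ × ℂ => ‖z‖ ^ m * ‖z‖ ^ n) = fun z : ℂ × ℂ => ‖z‖ ^ (m + n) := by
    funext z; rw [pow_add]
  rw [h2] at h1
  exact h1.trans_isLittleO (pow_o hk)

/-! ### Coefficient extraction -/

lemma extract {P : ℂ × ℂ → ℂ} (hP : P =o[nhds 0] fun z => ‖z‖ ^ 4)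
    (v K : ℂ) (hK : ∀ t : ℂ, P (t, t * v) = K * t ^ 4) : K = 0 := by
  have hcurve : Filter.Tendsto (fun t : ℂ => ((t, t * v) : ℂ × ℂ)) (nhds 0) (nhds 0) := by
    have : Continuous fun t : ℂ => ((t, t * v) : ℂ × ℂ) :=
      continuous_id.prodMk (continuous_id.mul continuous_const)
    have h0 : ((0:ℂ), (0:ℂ) * v) = (0 : ℂ × ℂ) := by ext <;> simp
    rw [← h0]; exact this.tendsto 0
  have h1 := hP.comp_tendsto hcurve
  have h2 : (fun t : ℂ => ‖((t, t * v) : ℂ × ℂ)‖ ^ 4) =O[nhds 0]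
      fun t : ℂ => ‖t‖ ^ 4 := by
    rw [Asymptotics.isBigO_iff]
    refine ⟨(max 1 ‖v‖) ^ 4, Eventually.of_forall fun t => ?_⟩
    have : ‖((t, t * v) : ℂ × ℂ)‖ ≤ max 1 ‖v‖ * ‖t‖ := by
      rw [Prod.norm_def]
      refine max_le ?_ ?_
      · calc ‖t‖ = 1 * ‖t‖ := (one_mul _).symm
          _ ≤ max 1 ‖v‖ * ‖t‖ :=
            mul_le_mul_of_nonneg_right (le_max_left _ _) (norm_nonneg _)
      · calc ‖t * v‖ = ‖v‖ * ‖t‖ := by rw [norm_mul]; ring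
          _ ≤ max 1 ‖v‖ * ‖t‖ :=
            mul_le_mul_of_nonneg_right (le_max_right _ _) (norm_nonneg _)
    calc ‖‖((t, t * v) : ℂ × ℂ)‖ ^ 4‖ = ‖((t, t * v) : ℂ × ℂ)‖ ^ 4 := by
          simp [_root_.abs_of_nonneg (pow_nonneg (norm_nonneg _) _)]
      _ ≤ (max 1 ‖v‖ * ‖t‖) ^ 4 := pow_le_pow_left₀ (norm_nonneg _) this 4
      _ = (max 1 ‖v‖) ^ 4 * ‖t‖ ^ 4 := mul_pow _ _ _
      _ = (max 1 ‖v‖) ^ 4 * ‖‖t‖ ^ 4‖ := by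
          simp [_root_.abs_of_nonneg (pow_nonneg (norm_nonneg _) _)]
  have h3 : (fun t : ℂ => K * t ^ 4) =o[nhds 0] fun t : ℂ => ‖t‖ ^ 4 := by
    refine ((h1.trans_isBigO h2).congr (fun t => ?_) (fun t => rfl))
    simp [Function.comp, hK t]
  by_contra hKne
  have hKpos : 0 < ‖K‖ / 2 := div_pos (norm_pos_iff.mpr hKne) two_pos
  have h4 := (Asymptotics.isLittleO_iff.mp h3) hKpos
  have h5 : ∀ᶠ t : ℂ in nhdsWithin 0 {0}ᶜ,
      ‖K * t ^ 4‖ ≤ ‖K‖ / 2 * ‖‖t‖ ^ 4‖ := eventually_nhdsWithin_of_eventually_nhds h4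
  obtain ⟨t, ht, htne⟩ := (h5.and eventually_mem_nhdsWithin).exists
  have htne' : t ≠ 0 := htne
  rw [norm_mul, norm_pow] at ht
  have hnorm : ‖‖t‖ ^ 4‖ = ‖t‖ ^ 4 := by
    simp [_root_.abs_of_nonneg (pow_nonneg (norm_nonneg _) _)]
  rw [hnorm] at ht
  have htpos : 0 < ‖t‖ ^ 4 := pow_pos (norm_pos_iff.mpr htne') 4
  nlinarith [norm_pos_iff.mpr hKne]

/-! ### Cauchy-estimate lemmas for partial derivatives -/

lemma pd2_littleO {h : ℂ × ℂ → ℂ} (hd : ∀ x : ℂ, Differentiable ℂ fun t => h (x, t))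
    {n : ℕ} (ho : h =o[nhds 0] fun z => ‖z‖ ^ (n + 1)) :
    pd2 h =o[nhds 0] fun z => ‖z‖ ^ n := by
  rw [Asymptotics.isLittleO_iff]
  intro c hc
  have hc' : 0 < c / 2 ^ (n + 1) := by positivity
  obtain ⟨δ, hδ, hball⟩ := Metric.eventually_nhds_iff_ball.mp
    (Asymptotics.isLittleO_iff.mp ho hc')
  have key : ∀ z : ℂ × ℂ, ∀ r : ℝ, 0 < r → ‖z‖ + r < δ →
      ‖pd2 h z‖ ≤ c / 2 ^ (n + 1) * (‖z‖ + r) ^ (n + 1) / r := by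
    intro z r hr hlt
    have hdc : DiffContOnCl ℂ (fun t => h (z.1, t)) (ball z.2 r) :=
      ((hd z.1).differentiableOn).diffContOnCl
    refine Complex.norm_deriv_le_of_forall_mem_sphere_norm_le hr hdc fun w hw => ?_
    have hwn : ‖w - z.2‖ = r := by simpa [dist_eq_norm] using hw
    have hwb : ‖w‖ ≤ ‖z‖ + r := by
      calc ‖w‖ ≤ ‖z.2‖ + ‖w - z.2‖ := by simpa using norm_add_le z.2 (w - z.2)
        _ ≤ ‖z‖ + r := by rw [hwn]; exact add_le_add_left (norm_snd_le z) r
    have hmem : (z.1, w) ∈ ball (0 : ℂ × ℂ) δ := by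
      rw [mem_ball, dist_zero_right, Prod.norm_def]
      exact max_lt (lt_of_le_of_lt (norm_fst_le z) (by linarith)) (lt_of_le_of_lt hwb hlt)
    have := hball _ hmem
    calc ‖h (z.1, w)‖ ≤ c / 2 ^ (n + 1) * ‖‖(z.1, w)‖ ^ (n + 1)‖ := this
      _ = c / 2 ^ (n + 1) * ‖(z.1, w)‖ ^ (n + 1) := by
          simp [_root_.abs_of_nonneg (pow_nonneg (norm_nonneg _) _)]
      _ ≤ c / 2 ^ (n + 1) * (‖z‖ + r) ^ (n + 1) := by
          refine mul_le_mul_of_nonneg_left (pow_le_pow_left₀ (norm_nonneg _) ?_ _) hc'.le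
          rw [Prod.norm_def]
          exact max_le (le_trans (norm_fst_le z) (by linarith)) hwb
  have hev : ∀ᶠ z : ℂ × ℂ in nhds 0, ‖z‖ < δ / 2 := by
    have := Metric.ball_mem_nhds (0 : ℂ × ℂ) (by positivity : (0:ℝ) < δ / 2)
    filter_upwards [this] with z hz
    simpa [dist_zero_right] using hz
  filter_upwards [hev] with z hz
  rcases eq_or_ne z 0 with rfl | hz0
  · have htt : Filter.Tendsto (fun r : ℝ => c / 2 ^ (n+1) * r ^ n)
        (nhdsWithin 0 (Set.Ioi 0)) (nhds (c / 2 ^ (n+1) * (0:ℝ) ^ n)) := by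
      have h1 : Filter.Tendsto (fun r : ℝ => c / 2 ^ (n+1) * r ^ n) (nhds 0)
          (nhds (c / 2 ^ (n+1) * (0:ℝ) ^ n)) := by
        exact (continuous_const.mul (continuous_pow n)).tendsto 0
      exact h1.mono_left nhdsWithin_le_nhds
    have hle : ‖pd2 h 0‖ ≤ c / 2 ^ (n + 1) * (0:ℝ) ^ n := by
      refine ge_of_tendsto htt ?_
      have hmem : Set.Ioo (0:ℝ) δ ∈ nhdsWithin (0:ℝ) (Set.Ioi 0) :=
        Ioo_mem_nhdsGT_of_mem ⟨le_refl 0, hδ⟩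
      filter_upwards [hmem] with r hr
      have := key 0 r hr.1 (by simpa using hr.2)
      calc ‖pd2 h 0‖ ≤ c / 2 ^ (n + 1) * (‖(0 : ℂ × ℂ)‖ + r) ^ (n + 1) / r := this
        _ = c / 2 ^ (n+1) * r ^ n := by
            rw [norm_zero, zero_add, mul_div_assoc]
            congr 1
            rw [pow_succ, mul_div_cancel_right₀ _ hr.1.ne']
    have h2pow : c / 2 ^ (n+1) ≤ c := by
      rw [div_le_iff₀ (by positivity)]
      nlinarith [one_le_pow₀ (by norm_num : (1:ℝ) ≤ 2) (n := n+1), hc]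
    calc ‖pd2 h 0‖ ≤ c / 2 ^ (n + 1) * (0:ℝ) ^ n := hle
      _ ≤ c * (0:ℝ) ^ n := mul_le_mul_of_nonneg_right h2pow (by positivity)
      _ ≤ c * ‖‖(0 : ℂ × ℂ)‖ ^ n‖ := by
          rcases Nat.eq_zero_or_pos n with rfl | hn
          · simp
          · simp [zero_pow hn.ne']
  · have hzn : 0 < ‖z‖ := norm_pos_iff.mpr hz0
    have := key z ‖z‖ hzn (by linarith)
    calc ‖pd2 h z‖ ≤ c / 2 ^ (n + 1) * (‖z‖ + ‖z‖) ^ (n + 1) / ‖z‖ := this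
      _ = c * ‖z‖ ^ n := by
          rw [show ‖z‖ + ‖z‖ = 2 * ‖z‖ by ring, mul_pow, pow_succ ‖z‖ n]
          field_simp
      _ ≤ c * ‖‖z‖ ^ n‖ := by
          simp [_root_.abs_of_nonneg (pow_nonneg (norm_nonneg _) _)]

lemma norm_swap' (z : ℂ × ℂ) : ‖Prod.swap z‖ = ‖z‖ := by
  rw [Prod.norm_def, Prod.norm_def, max_comm]; rfl

lemma pd1_eq_swap (h : ℂ × ℂ → ℂ) (z : ℂ × ℂ) :
    pd1 h z = pd2 (h ∘ Prod.swap) (Prod.swap z) := rfl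

lemma pd1_littleO {h : ℂ × ℂ → ℂ} (hd : ∀ y : ℂ, Differentiable ℂ fun u => h (u, y))
    {n : ℕ} (ho : h =o[nhds 0] fun z => ‖z‖ ^ (n + 1)) :
    pd1 h =o[nhds 0] fun z => ‖z‖ ^ n := by
  have hsw : Filter.Tendsto (Prod.swap : ℂ × ℂ → ℂ × ℂ) (nhds 0) (nhds 0) := by
    simpa using (Continuous.tendsto (continuous_swap) ((0 : ℂ × ℂ)))
  have h1 : (h ∘ Prod.swap) =o[nhds 0] fun z : ℂ × ℂ => ‖z‖ ^ (n + 1) := by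
    have := ho.comp_tendsto hsw
    simpa [Function.comp_def, norm_swap'] using this
  have h2 : pd2 (h ∘ Prod.swap) =o[nhds 0] fun z : ℂ × ℂ => ‖z‖ ^ n :=
    pd2_littleO (fun x => by simpa using hd x) h1
  have h3 := h2.comp_tendsto hsw
  have h4 : (fun z : ℂ × ℂ => pd2 (h ∘ Prod.swap) (Prod.swap z)) =o[nhds 0]
      fun z : ℂ × ℂ => ‖z‖ ^ n := by
    simpa [Function.comp_def, norm_swap'] using h3
  exact h4.congr' (by filter_upwards with z; rw [pd1_eq_swap]) (by rfl)

lemma deriv_entire {g : ℂ → ℂ} (hg : Differentiable ℂ g) : Differentiable ℂ (deriv g) := by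
  have : AnalyticOnNhd ℂ g Set.univ :=
    Complex.analyticOnNhd_univ_iff_differentiable.mpr hg
  exact fun x => ((this.deriv) x trivial).differentiableAt

/-! ### Mixed partials: differentiability of `t ↦ pd1 h (s, t)` -/

lemma two_pi_I_ne : (2 * ↑π * Complex.I : ℂ) ≠ 0 := by
  simp [Real.pi_ne_zero, Complex.I_ne_zero, Complex.ofReal_ne_zero]

lemma norm_two_pi_I : ‖(2 * ↑π * Complex.I : ℂ)‖ = 2 * π := by
  simp [norm_mul, Complex.norm_real, _root_.abs_of_nonneg Real.pi_pos.le]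

lemma slice_pd1_diff {h : ℂ × ℂ → ℂ} (hd : Differentiable ℂ h) (s : ℂ) :
    Differentiable ℂ fun t => pd1 h (s, t) := by
  have hslice : ∀ t : ℂ, Differentiable ℂ fun u => h (u, t) := fun t =>
    hd.comp (differentiable_id.prodMk (differentiable_const t))
  rw [← differentiableOn_univ]
  set F : ℂ → ℂ → ℂ := fun u t => (h (s + u, t) - h (s, t)) / u with hFdef
  refine TendstoLocallyUniformlyOn.differentiableOn
      (F := F) (f := fun t => pd1 h (s, t)) (φ := nhdsWithin (0:ℂ) {0}ᶜ) ?_ ?_ isOpen_univ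
  · rw [tendstoLocallyUniformlyOn_iff_forall_isCompact isOpen_univ]
    intro K _ hK
    rw [Metric.tendstoUniformlyOn_iff]
    intro ε hε
    have hS : IsCompact ((closedBall s 1) ×ˢ K) := (isCompact_closedBall s 1).prod hK
    obtain ⟨M, hM⟩ := hS.exists_bound_of_continuousOn hd.continuous.continuousOn
    set M1 : ℝ := max M 0 with hM1def
    have hM1 : 0 ≤ M1 := le_max_right _ _
    have hMle : ∀ p ∈ (closedBall s 1) ×ˢ K, ‖h p‖ ≤ M1 :=
      fun p hp => (hM p hp).trans (le_max_left _ _)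
    have hr0pos : (0:ℝ) < min (1/2) (ε / (2 * M1 + 1)) :=
      lt_min (by norm_num) (div_pos hε (by linarith))
    have hev1 : ∀ᶠ u : ℂ in nhdsWithin (0:ℂ) {0}ᶜ,
        ‖u‖ < min (1/2) (ε / (2 * M1 + 1)) := by
      apply eventually_nhdsWithin_of_eventually_nhds
      filter_upwards [Metric.ball_mem_nhds (0:ℂ) hr0pos] with u hu
      simpa [dist_zero_right] using hu
    filter_upwards [hev1, eventually_mem_nhdsWithin] with u hu hu0
    intro t htK
    have hune : u ≠ 0 := hu0
    have hu12 : ‖u‖ < 1/2 := hu.trans_le (min_le_left _ _)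
    set g : ℂ → ℂ := fun ζ => h (ζ, t) with hgdef
    have hg : Differentiable ℂ g := hslice t
    have dcc : DiffContOnCl ℂ g (ball s 1) := hg.differentiableOn.diffContOnCl
    have hsub : (s + u) ∈ ball s 1 := by
      rw [mem_ball, dist_eq_norm, add_sub_cancel_left]
      linarith
    have hA := dcc.circleIntegral_sub_inv_smul hsub
    have hB := dcc.circleIntegral_sub_inv_smul (mem_ball_self one_pos)
    have hC : deriv g s = (2 * ↑π * Complex.I : ℂ)⁻¹ • ∮ ζ in C(s, 1), (ζ - s) ^ (-2 : ℤ) • g ζ := by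
      have H := dcc.deriv_eq_smul_circleIntegral one_pos
      have e : (fun ζ => (ζ - s) ^ (-2 : ℤ) • g ζ) = fun ζ => (1 / (ζ - s) ^ 2) • g ζ := by
        funext ζ; simp [zpow_neg, one_div]
      rw [e, H, smul_smul, inv_mul_cancel₀ two_pi_I_ne, one_smul]
    have hsn : ∀ ζ ∈ sphere s 1, ζ - s ≠ 0 := by
      intro ζ hζ
      have : ‖ζ - s‖ = 1 := by simpa [dist_eq_norm] using hζ
      intro hcon; rw [hcon] at this; simp at this
    have hsn2 : ∀ ζ ∈ sphere s 1, ζ - (s + u) ≠ 0 := by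
      intro ζ hζ hcon
      have h1 : ‖ζ - s‖ = 1 := by simpa [dist_eq_norm] using hζ
      have : ζ - s = u := by rw [← sub_sub] at hcon; linear_combination hcon
      rw [this] at h1; rw [h1] at hu12; norm_num at hu12
    have hgc : ContinuousOn g (sphere s 1) := hg.continuous.continuousOn
    have c2 : ContinuousOn (fun ζ => (ζ - s)⁻¹ * g ζ) (sphere s 1) :=
      (((continuous_id.sub continuous_const).continuousOn).inv₀
        (fun ζ hζ => hsn ζ hζ)).mul hgc
    have c3 : ContinuousOn (fun ζ => (ζ - s) ^ (-2 : ℤ) * g ζ) (sphere s 1) := by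
      refine ContinuousOn.mul ?_ hgc
      exact ((continuous_id.sub continuous_const).continuousOn).zpow₀ _
        (fun ζ hζ => Or.inl (hsn ζ hζ))
    have i1 : CircleIntegrable (fun ζ => (ζ - (s+u))⁻¹ * g ζ) s 1 :=
      ((((continuous_id.sub continuous_const).continuousOn).inv₀
        (fun ζ hζ => hsn2 ζ hζ)).mul hgc).circleIntegrable one_pos.le
    have i2 : CircleIntegrable (fun ζ => (ζ - s)⁻¹ * g ζ) s 1 :=
      c2.circleIntegrable one_pos.le
    have i3 : CircleIntegrable (fun ζ => (ζ - s) ^ (-2 : ℤ) * g ζ) s 1 :=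
      c3.circleIntegrable one_pos.le
    have i12 : CircleIntegrable
        (fun ζ => u⁻¹ * ((ζ - (s+u))⁻¹ * g ζ - (ζ - s)⁻¹ * g ζ)) s 1 :=
      (((((continuous_id.sub continuous_const).continuousOn).inv₀
        (fun ζ hζ => hsn2 ζ hζ)).mul hgc).sub c2).const_smul u⁻¹ |>.circleIntegrable one_pos.le
    set kern : ℂ → ℂ := fun ζ =>
      (u⁻¹ * ((ζ - (s+u))⁻¹ - (ζ - s)⁻¹) - (ζ - s) ^ (-2 : ℤ)) * g ζ with hkern
    have hJ : (∮ ζ in C(s, 1), kern ζ)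
        = u⁻¹ * ((∮ ζ in C(s,1), (ζ - (s+u))⁻¹ * g ζ) - ∮ ζ in C(s,1), (ζ - s)⁻¹ * g ζ)
          - ∮ ζ in C(s,1), (ζ - s) ^ (-2 : ℤ) * g ζ := by
      have e1 : ∀ ζ, kern ζ =
          u⁻¹ * ((ζ - (s+u))⁻¹ * g ζ - (ζ - s)⁻¹ * g ζ) - (ζ - s) ^ (-2 : ℤ) * g ζ := by
        intro ζ; simp only [hkern]; ring
      calc (∮ ζ in C(s, 1), kern ζ)
          = ∮ ζ in C(s,1), (u⁻¹ * ((ζ - (s+u))⁻¹ * g ζ - (ζ - s)⁻¹ * g ζ)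
              - (ζ - s) ^ (-2 : ℤ) * g ζ) :=
            circleIntegral.integral_congr one_pos.le (fun ζ _ => e1 ζ)
        _ = (∮ ζ in C(s,1), u⁻¹ * ((ζ - (s+u))⁻¹ * g ζ - (ζ - s)⁻¹ * g ζ))
              - ∮ ζ in C(s,1), (ζ - s) ^ (-2 : ℤ) * g ζ :=
            circleIntegral.integral_sub i12 i3
        _ = u⁻¹ * ((∮ ζ in C(s,1), (ζ - (s+u))⁻¹ * g ζ) - ∮ ζ in C(s,1), (ζ - s)⁻¹ * g ζ)
              - ∮ ζ in C(s,1), (ζ - s) ^ (-2 : ℤ) * g ζ := by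
            rw [show (fun ζ => u⁻¹ * ((ζ - (s+u))⁻¹ * g ζ - (ζ - s)⁻¹ * g ζ))
                = fun ζ => u⁻¹ • ((ζ - (s+u))⁻¹ * g ζ - (ζ - s)⁻¹ * g ζ) from rfl,
              circleIntegral.integral_smul, circleIntegral.integral_sub i1 i2]
            simp [smul_eq_mul]
    have hkey : F u t - pd1 h (s, t) = (2 * ↑π * Complex.I)⁻¹ * ∮ ζ in C(s, 1), kern ζ := by
      have hpd : pd1 h (s, t) = deriv g s := rfl
      rw [hJ, hpd, hC]
      have hA' : (∮ ζ in C(s,1), (ζ - (s+u))⁻¹ * g ζ)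
          = (2 * ↑π * Complex.I) * g (s + u) := by
        simpa [smul_eq_mul] using hA
      have hB' : (∮ ζ in C(s,1), (ζ - s)⁻¹ * g ζ) = (2 * ↑π * Complex.I) * g s := by
        simpa [smul_eq_mul] using hB
      rw [hA', hB']
      simp only [hFdef, smul_eq_mul, hgdef]
      field_simp [hune]
    have hbound : ∀ ζ ∈ sphere s 1, ‖kern ζ‖ ≤ 2 * M1 * ‖u‖ := by
      intro ζ hζ
      have hζ1 : ‖ζ - s‖ = 1 := by simpa [dist_eq_norm] using hζ
      have hx := hsn ζ hζ
      have hy := hsn2 ζ hζ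
      have hker2 : kern ζ = u * (((ζ - s)^2 * (ζ - (s+u)))⁻¹ * g ζ) := by
        simp only [hkern]
        have : (ζ - s) ^ (-2 : ℤ) = ((ζ - s)^2)⁻¹ := by
          rw [zpow_neg, zpow_two, sq]
        rw [this]
        field_simp
        ring
      have hynorm : (1:ℝ)/2 ≤ ‖ζ - (s+u)‖ := by
        have h3 : ζ - (s + u) = (ζ - s) - u := by ring
        rw [h3]
        have h2 : ‖ζ - s‖ - ‖u‖ ≤ ‖(ζ - s) - u‖ := by
          simpa using norm_sub_norm_le (ζ - s) u
        rw [hζ1] at h2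
        linarith
      have hgb : ‖g ζ‖ ≤ M1 := by
        refine hMle (ζ, t) ?_
        constructor
        · simpa [mem_closedBall, dist_eq_norm] using le_of_eq hζ1
        · exact htK
      rw [hker2]
      rw [norm_mul, norm_mul, norm_inv, norm_mul, norm_pow, hζ1]
      have hYpos : (0:ℝ) < ‖ζ - (s+u)‖ := by linarith
      have hinv : (‖ζ - (s+u)‖)⁻¹ ≤ 2 := by
        have := inv_anti₀ (by norm_num : (0:ℝ) < 1/2) hynorm
        simpa using this
      have hgnn : (0:ℝ) ≤ ‖g ζ‖ := norm_nonneg _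
      have hinn : (0:ℝ) ≤ (‖ζ - (s+u)‖)⁻¹ := by positivity
      simp only [one_pow, one_mul]
      nlinarith [norm_nonneg u, mul_le_mul hinv hgb hgnn (by norm_num : (0:ℝ) ≤ 2)]
    have hInorm : ‖∮ ζ in C(s, 1), kern ζ‖ ≤ 2 * π * 1 * (2 * M1 * ‖u‖) :=
      circleIntegral.norm_integral_le_of_norm_le_const one_pos.le hbound
    have h5 : ‖u‖ * (2 * M1 + 1) < ε := by
      rw [← lt_div_iff₀ (by linarith : (0:ℝ) < 2 * M1 + 1)]
      exact hu.trans_le (min_le_right _ _)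
    calc dist (pd1 h (s,t)) (F u t) = ‖F u t - pd1 h (s,t)‖ := by
          rw [dist_comm, dist_eq_norm]
      _ = ‖(2 * ↑π * Complex.I : ℂ)⁻¹‖ * ‖∮ ζ in C(s, 1), kern ζ‖ := by
          rw [hkey, norm_mul]
      _ ≤ (2 * π)⁻¹ * (2 * π * 1 * (2 * M1 * ‖u‖)) := by
          rw [norm_inv, norm_two_pi_I]
          exact mul_le_mul_of_nonneg_left hInorm (by positivity)
      _ = 2 * M1 * ‖u‖ := by
          field_simp
      _ < ε := by nlinarith [norm_nonneg u, hM1, h5]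
  · filter_upwards with u
    exact (((hd.comp ((differentiable_const (s+u)).prodMk differentiable_id)).sub
      (hd.comp ((differentiable_const s).prodMk differentiable_id))).div_const u).differentiableOn

/-! ### Polynomial helpers -/

lemma diff_poly4 (p q r s t : ℂ) :
    Differentiable ℂ (fun w : ℂ => p + q * w + r * w ^ 2 + s * w ^ 3 + t * w ^ 4) := by
  fun_prop

lemma deriv_poly4 (p q r s t : ℂ) (x : ℂ) :
    deriv (fun w : ℂ => p + q * w + r * w ^ 2 + s * w ^ 3 + t * w ^ 4) x
      = q + 2 * r * x + 3 * s * x ^ 2 + 4 * t * x ^ 3 := by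
  have H : HasDerivAt (fun w : ℂ => p + q * w + r * w ^ 2 + s * w ^ 3 + t * w ^ 4)
      (q + 2 * r * x + 3 * s * x ^ 2 + 4 * t * x ^ 3) x := by
    have h0 : HasDerivAt (fun _ : ℂ => p) 0 x := hasDerivAt_const x p
    have h1 : HasDerivAt (fun w : ℂ => q * w) q x := by
      simpa using (hasDerivAt_id x).const_mul q
    have h2 : HasDerivAt (fun w : ℂ => r * w ^ 2) (r * (2 * x ^ 1)) x := by
      simpa using (hasDerivAt_pow 2 x).const_mul r
    have h3 : HasDerivAt (fun w : ℂ => s * w ^ 3) (s * (3 * x ^ 2)) x := by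
      simpa using (hasDerivAt_pow 3 x).const_mul s
    have h4 : HasDerivAt (fun w : ℂ => t * w ^ 4) (t * (4 * x ^ 3)) x := by
      simpa using (hasDerivAt_pow 4 x).const_mul t
    have := (((h0.add h1).add h2).add h3).add h4
    exact this.congr_deriv (by ring)
  exact H.deriv

lemma diff_T4 (a b c d e : ℂ) :
    Differentiable ℂ (fun z : ℂ × ℂ => z.1 ^ 2 + a * z.1 ^ 4 + b * z.1 ^ 3 * z.2
      + c * z.1 ^ 2 * z.2 ^ 2 + d * z.1 * z.2 ^ 3 + e * z.2 ^ 4) := by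
  fun_prop

end AuxLemmas

theorem stmt3 (φ φ22 φ12 : ℂ × ℂ → ℂ) (a b c d e f₅ f₆ : ℂ)
    (hφan : Differentiable ℂ φ) (hφ22an : Differentiable ℂ φ22)
    (hφ12an : Differentiable ℂ φ12)
    (hφeven : ∀ z, φ (-z) = φ z)
    (hφ22even : ∀ z, φ22 (-z) = φ22 z)
    (hφ12even : ∀ z, φ12 (-z) = φ12 z)
    (hφtaylor : (fun z : ℂ × ℂ =>
        φ z - (z.1 ^ 2 + a * z.1 ^ 4 + b * z.1 ^ 3 * z.2 + c * z.1 ^ 2 * z.2 ^ 2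
          + d * z.1 * z.2 ^ 3 + e * z.2 ^ 4))
      =o[nhds (0 : ℂ × ℂ)] fun z => ‖z‖ ^ 4)
    (hφ22taylor : (fun z : ℂ × ℂ => φ22 z - 2 * z.1 * z.2)
      =o[nhds (0 : ℂ × ℂ)] fun z => ‖z‖ ^ 2)
    (hφ12taylor : (fun z : ℂ × ℂ => φ12 z - (-z.2 ^ 2))
      =o[nhds (0 : ℂ × ℂ)] fun z => ‖z‖ ^ 2)
    (heq1 : ∀ z, φ z * pd2 (pd2 φ) z - (pd2 φ z) ^ 2
      = -(f₅ / 2) * (φ z * φ22 z) - f₆ * ((φ22 z) ^ 2 + φ z * φ12 z))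
    (heq2 : ∀ z, φ z * pd2 (pd1 φ) z - pd1 φ z * pd2 φ z
      = -(f₅ / 2) * (φ z * φ12 z) - f₆ * (φ12 z * φ22 z)) :
    b = 0 ∧ c = 0 ∧ d = -f₅ / 6 ∧ e = -f₆ / 4 := by
  classical
  set hh : ℂ × ℂ → ℂ := fun z => φ z - (z.1 ^ 2 + a * z.1 ^ 4 + b * z.1 ^ 3 * z.2
    + c * z.1 ^ 2 * z.2 ^ 2 + d * z.1 * z.2 ^ 3 + e * z.2 ^ 4) with hhdef
  have hhdiff : Differentiable ℂ hh := hφan.sub (diff_T4 a b c d e)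
  have hhs2 : ∀ x : ℂ, Differentiable ℂ fun t => hh (x, t) := fun x =>
    hhdiff.comp ((differentiable_const x).prodMk differentiable_id)
  have hhs1 : ∀ y : ℂ, Differentiable ℂ fun u => hh (u, y) := fun y =>
    hhdiff.comp (differentiable_id.prodMk (differentiable_const y))
  have o_hh : hh =o[nhds 0] fun z : ℂ × ℂ => ‖z‖ ^ 4 := hφtaylor
  have o2 : pd2 hh =o[nhds 0] fun z : ℂ × ℂ => ‖z‖ ^ 3 := pd2_littleO hhs2 o_hh
  have o22 : pd2 (pd2 hh) =o[nhds 0] fun z : ℂ × ℂ => ‖z‖ ^ 2 :=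
    pd2_littleO (fun x => deriv_entire (hhs2 x)) o2
  have o1 : pd1 hh =o[nhds 0] fun z : ℂ × ℂ => ‖z‖ ^ 3 := pd1_littleO hhs1 o_hh
  have o21 : pd2 (pd1 hh) =o[nhds 0] fun z : ℂ × ℂ => ‖z‖ ^ 2 :=
    pd2_littleO (fun x => slice_pd1_diff hhdiff x) o1
  -- explicit partial derivatives
  have E1 : ∀ x t : ℂ, pd2 φ (x, t)
      = b * x ^ 3 + 2 * c * x ^ 2 * t + 3 * d * x * t ^ 2 + 4 * e * t ^ 3
        + pd2 hh (x, t) := by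
    intro x t
    have hsplit : (fun w => φ (x, w)) = fun w =>
        ((x ^ 2 + a * x ^ 4) + (b * x ^ 3) * w + (c * x ^ 2) * w ^ 2 + (d * x) * w ^ 3
          + e * w ^ 4) + hh (x, w) := by
      funext w; simp only [hhdef]; ring
    show deriv (fun w => φ (x, w)) t = _
    rw [hsplit, deriv_fun_add ((diff_poly4 _ _ _ _ _).differentiableAt)
      ((hhs2 x).differentiableAt), deriv_poly4]
    have hr : deriv (fun w => hh (x, w)) t = pd2 hh (x, t) := rfl
    rw [hr]; ring
  have E2 : ∀ x t : ℂ, pd2 (pd2 φ) (x, t)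
      = 2 * c * x ^ 2 + 6 * d * x * t + 12 * e * t ^ 2 + pd2 (pd2 hh) (x, t) := by
    intro x t
    have hsplit : (fun w => pd2 φ (x, w)) = fun w =>
        ((b * x ^ 3) + (2 * c * x ^ 2) * w + (3 * d * x) * w ^ 2 + (4 * e) * w ^ 3
          + 0 * w ^ 4) + pd2 hh (x, w) := by
      funext w; rw [E1 x w]; ring
    show deriv (fun w => pd2 φ (x, w)) t = _
    rw [hsplit, deriv_fun_add ((diff_poly4 _ _ _ _ _).differentiableAt)
      (show DifferentiableAt ℂ (fun w => pd2 hh (x, w)) t from (deriv_entire (hhs2 x)).differentiableAt), deriv_poly4]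
    have hr : deriv (fun w => pd2 hh (x, w)) t = pd2 (pd2 hh) (x, t) := rfl
    rw [hr]; ring
  have E3 : ∀ x t : ℂ, pd1 φ (x, t)
      = 2 * x + 4 * a * x ^ 3 + 3 * b * x ^ 2 * t + 2 * c * x * t ^ 2 + d * t ^ 3
        + pd1 hh (x, t) := by
    intro x t
    have hsplit : (fun w => φ (w, t)) = fun w =>
        ((e * t ^ 4) + (d * t ^ 3) * w + (1 + c * t ^ 2) * w ^ 2 + (b * t) * w ^ 3
          + a * w ^ 4) + hh (w, t) := by
      funext w; simp only [hhdef]; ring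
    show deriv (fun w => φ (w, t)) x = _
    rw [hsplit, deriv_fun_add ((diff_poly4 _ _ _ _ _).differentiableAt)
      ((hhs1 t).differentiableAt), deriv_poly4]
    have hr : deriv (fun w => hh (w, t)) x = pd1 hh (x, t) := rfl
    rw [hr]; ring
  have E4 : ∀ x t : ℂ, pd2 (pd1 φ) (x, t)
      = 3 * b * x ^ 2 + 4 * c * x * t + 3 * d * t ^ 2 + pd2 (pd1 hh) (x, t) := by
    intro x t
    have hsplit : (fun w => pd1 φ (x, w)) = fun w =>
        ((2 * x + 4 * a * x ^ 3) + (3 * b * x ^ 2) * w + (2 * c * x) * w ^ 2 + d * w ^ 3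
          + 0 * w ^ 4) + pd1 hh (x, w) := by
      funext w; rw [E3 x w]; ring
    show deriv (fun w => pd1 φ (x, w)) t = _
    rw [hsplit, deriv_fun_add ((diff_poly4 _ _ _ _ _).differentiableAt)
      (show DifferentiableAt ℂ (fun w => pd1 hh (x, w)) t from (slice_pd1_diff hhdiff x).differentiableAt), deriv_poly4]
    have hr : deriv (fun w => pd1 hh (x, w)) t = pd2 (pd1 hh) (x, t) := rfl
    rw [hr]; ring
  -- basic big-O facts for monomials and polynomial pieces
  have O10 : (fun z : ℂ × ℂ => z.1) =O[nhds 0] fun z : ℂ × ℂ => ‖z‖ ^ 1 := by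
    simpa using mon_O 1 0
  have O20 : (fun z : ℂ × ℂ => z.1 ^ 2) =O[nhds 0] fun z : ℂ × ℂ => ‖z‖ ^ 2 := by
    simpa using mon_O 2 0
  have O02 : (fun z : ℂ × ℂ => z.2 ^ 2) =O[nhds 0] fun z : ℂ × ℂ => ‖z‖ ^ 2 := by
    simpa using mon_O 0 2
  have O11 : (fun z : ℂ × ℂ => z.1 * z.2) =O[nhds 0] fun z : ℂ × ℂ => ‖z‖ ^ 2 := by
    simpa using mon_O 1 1
  have OQ4 : (fun z : ℂ × ℂ => a * z.1 ^ 4 + b * z.1 ^ 3 * z.2 + c * z.1 ^ 2 * z.2 ^ 2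
      + d * z.1 * z.2 ^ 3 + e * z.2 ^ 4) =O[nhds 0] fun z : ℂ × ℂ => ‖z‖ ^ 4 := by
    have := ((((mono_O' a 4 0 4 (by norm_num)).add (mono_O' b 3 1 4 (by norm_num))).add
      (mono_O' c 2 2 4 (by norm_num))).add (mono_O' d 1 3 4 (by norm_num))).add
      (mono_O' e 0 4 4 (by norm_num))
    exact this.congr (fun z => by ring) (fun z => rfl)
  have OP4 : (fun z : ℂ × ℂ => z.1 ^ 2 + a * z.1 ^ 4 + b * z.1 ^ 3 * z.2
      + c * z.1 ^ 2 * z.2 ^ 2 + d * z.1 * z.2 ^ 3 + e * z.2 ^ 4)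
      =O[nhds 0] fun z : ℂ × ℂ => ‖z‖ ^ 2 := by
    have := O20.add (OQ4.trans (pow_O (by norm_num : 2 ≤ 4)))
    exact this.congr (fun z => by ring) (fun z => rfl)
  have OC3 : (fun z : ℂ × ℂ => b * z.1 ^ 3 + 2 * c * z.1 ^ 2 * z.2
      + 3 * d * z.1 * z.2 ^ 2 + 4 * e * z.2 ^ 3) =O[nhds 0] fun z : ℂ × ℂ => ‖z‖ ^ 3 := by
    have := (((mono_O' b 3 0 3 (by norm_num)).add (mono_O' (2*c) 2 1 3 (by norm_num))).add
      (mono_O' (3*d) 1 2 3 (by norm_num))).add (mono_O' (4*e) 0 3 3 (by norm_num))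
    exact this.congr (fun z => by ring) (fun z => rfl)
  have OQ2 : (fun z : ℂ × ℂ => 2 * c * z.1 ^ 2 + 6 * d * z.1 * z.2 + 12 * e * z.2 ^ 2)
      =O[nhds 0] fun z : ℂ × ℂ => ‖z‖ ^ 2 := by
    have := ((mono_O' (2*c) 2 0 2 (by norm_num)).add (mono_O' (6*d) 1 1 2 (by norm_num))).add
      (mono_O' (12*e) 0 2 2 (by norm_num))
    exact this.congr (fun z => by ring) (fun z => rfl)
  have OD : (fun z : ℂ × ℂ => 3 * b * z.1 ^ 2 + 4 * c * z.1 * z.2 + 3 * d * z.2 ^ 2)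
      =O[nhds 0] fun z : ℂ × ℂ => ‖z‖ ^ 2 := by
    have := ((mono_O' (3*b) 2 0 2 (by norm_num)).add (mono_O' (4*c) 1 1 2 (by norm_num))).add
      (mono_O' (3*d) 0 2 2 (by norm_num))
    exact this.congr (fun z => by ring) (fun z => rfl)
  have OC1c : (fun z : ℂ × ℂ => 4 * a * z.1 ^ 3 + 3 * b * z.1 ^ 2 * z.2
      + 2 * c * z.1 * z.2 ^ 2 + d * z.2 ^ 3) =O[nhds 0] fun z : ℂ × ℂ => ‖z‖ ^ 3 := by
    have := (((mono_O' (4*a) 3 0 3 (by norm_num)).add (mono_O' (3*b) 2 1 3 (by norm_num))).add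
      (mono_O' (2*c) 1 2 3 (by norm_num))).add (mono_O' d 0 3 3 (by norm_num))
    exact this.congr (fun z => by ring) (fun z => rfl)
  -- little-o residuals, in terms of φ, φ22, φ12
  have oS1 : (fun z : ℂ × ℂ => φ22 z - 2 * z.1 * z.2) =o[nhds 0]
      fun z : ℂ × ℂ => ‖z‖ ^ 2 := hφ22taylor
  have oS2 : (fun z : ℂ × ℂ => φ12 z - (-z.2 ^ 2)) =o[nhds 0]
      fun z : ℂ × ℂ => ‖z‖ ^ 2 := hφ12taylor
  have oR0 : (fun z : ℂ × ℂ => φ z - z.1 ^ 2) =o[nhds 0] fun z : ℂ × ℂ => ‖z‖ ^ 2 := by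
    have h1 : hh =o[nhds 0] fun z : ℂ × ℂ => ‖z‖ ^ 2 :=
      o_hh.trans_isBigO (pow_O (by norm_num : 2 ≤ 4))
    have h2 := h1.add (OQ4.trans_isLittleO (pow_o (by norm_num : 2 < 4)))
    exact h2.congr (fun z => by simp only [hhdef]; ring) (fun z => rfl)
  have oR2 : (fun z : ℂ × ℂ => pd2 φ z - (b * z.1 ^ 3 + 2 * c * z.1 ^ 2 * z.2
      + 3 * d * z.1 * z.2 ^ 2 + 4 * e * z.2 ^ 3)) =o[nhds 0]
      fun z : ℂ × ℂ => ‖z‖ ^ 3 :=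
    o2.congr (fun z => by obtain ⟨x, t⟩ := z; linear_combination (-1 : ℂ) * (E1 x t)) (fun z => rfl)
  have oR3 : (fun z : ℂ × ℂ => pd2 (pd2 φ) z - (2 * c * z.1 ^ 2 + 6 * d * z.1 * z.2
      + 12 * e * z.2 ^ 2)) =o[nhds 0] fun z : ℂ × ℂ => ‖z‖ ^ 2 :=
    o22.congr (fun z => by obtain ⟨x, t⟩ := z; linear_combination (-1 : ℂ) * (E2 x t)) (fun z => rfl)
  have oR4 : (fun z : ℂ × ℂ => pd1 φ z - (2 * z.1 + 4 * a * z.1 ^ 3 + 3 * b * z.1 ^ 2 * z.2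
      + 2 * c * z.1 * z.2 ^ 2 + d * z.2 ^ 3)) =o[nhds 0] fun z : ℂ × ℂ => ‖z‖ ^ 3 :=
    o1.congr (fun z => by obtain ⟨x, t⟩ := z; linear_combination (-1 : ℂ) * (E3 x t)) (fun z => rfl)
  have oR5 : (fun z : ℂ × ℂ => pd2 (pd1 φ) z - (3 * b * z.1 ^ 2 + 4 * c * z.1 * z.2
      + 3 * d * z.2 ^ 2)) =o[nhds 0] fun z : ℂ × ℂ => ‖z‖ ^ 2 :=
    o21.congr (fun z => by obtain ⟨x, t⟩ := z; linear_combination (-1 : ℂ) * (E4 x t)) (fun z => rfl)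
  -- === first key relation ===
  have big1 : (fun z : ℂ × ℂ => 2 * c * z.1 ^ 4 + (6 * d + f₅) * (z.1 ^ 3 * z.2)
      + (12 * e + 3 * f₆) * (z.1 ^ 2 * z.2 ^ 2)) =o[nhds 0]
      fun z : ℂ × ℂ => ‖z‖ ^ 4 := by
    have T1 := (O_mul_o (k := 4) O20 oS1 (by norm_num)).const_mul_left (-(f₅/2))
    have T2 := (O_mul_o (k := 4) O11 oR0 (by norm_num)).const_mul_left (-f₅)
    have T3 := (o_mul_o (k := 4) oR0 oS1 (by norm_num)).const_mul_left (-(f₅/2))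
    have T4 := (O_mul_o (k := 4) O11 oS1 (by norm_num)).const_mul_left (-(4*f₆))
    have T5 := (o_mul_o (k := 4) oS1 oS1 (by norm_num)).const_mul_left (-f₆)
    have T6 := (O_mul_o (k := 4) O20 oS2 (by norm_num)).const_mul_left (-f₆)
    have T7 := (O_mul_o (k := 4) O02 oR0 (by norm_num)).const_mul_left f₆
    have T8 := (o_mul_o (k := 4) oR0 oS2 (by norm_num)).const_mul_left (-f₆)
    have T9 := (O_mul_O (k := 4) OQ4 OQ2 (by norm_num)).const_mul_left (-1 : ℂ)
    have T10 := (O_mul_o (k := 4) OP4 oR3 (by norm_num)).const_mul_left (-1 : ℂ)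
    have T11 := (o_mul_O (k := 4) o_hh OQ2 (by norm_num)).const_mul_left (-1 : ℂ)
    have T12 := (o_mul_o (k := 4) o_hh oR3 (by norm_num)).const_mul_left (-1 : ℂ)
    have T13 := (O_mul_O (k := 4) OC3 OC3 (by norm_num)).const_mul_left (1 : ℂ)
    have T14 := (O_mul_o (k := 4) OC3 oR2 (by norm_num)).const_mul_left (2 : ℂ)
    have T15 := (o_mul_o (k := 4) oR2 oR2 (by norm_num)).const_mul_left (1 : ℂ)
    have S := T1.add T2 |>.add T3 |>.add T4 |>.add T5 |>.add T6 |>.add T7 |>.add T8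
      |>.add T9 |>.add T10 |>.add T11 |>.add T12 |>.add T13 |>.add T14 |>.add T15
    refine S.congr (fun z => ?_) (fun z => rfl)
    obtain ⟨x, t⟩ := z
    simp only [hhdef]
    linear_combination (-1 : ℂ) * heq1 (x, t)
  -- === second key relation ===
  have big2 : (fun z : ℂ × ℂ => b * z.1 ^ 4 + (-3 * d - f₅ / 2) * (z.1 ^ 2 * z.2 ^ 2)
      + (-8 * e - 2 * f₆) * (z.1 * z.2 ^ 3)) =o[nhds 0]
      fun z : ℂ × ℂ => ‖z‖ ^ 4 := by
    have U1 := (O_mul_o (k := 4) O20 oS2 (by norm_num)).const_mul_left (-(f₅/2))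
    have U2 := (O_mul_o (k := 4) O02 oR0 (by norm_num)).const_mul_left (f₅/2)
    have U3 := (o_mul_o (k := 4) oR0 oS2 (by norm_num)).const_mul_left (-(f₅/2))
    have U4 := (O_mul_o (k := 4) O02 oS1 (by norm_num)).const_mul_left f₆
    have U5 := (O_mul_o (k := 4) O11 oS2 (by norm_num)).const_mul_left (-(2*f₆))
    have U6 := (o_mul_o (k := 4) oS2 oS1 (by norm_num)).const_mul_left (-f₆)
    have U7 := (O_mul_o (k := 4) O20 oR5 (by norm_num)).const_mul_left (-1 : ℂ)
    have U8 := (o_mul_O (k := 4) oR0 OD (by norm_num)).const_mul_left (-1 : ℂ)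
    have U9 := (o_mul_o (k := 4) oR0 oR5 (by norm_num)).const_mul_left (-1 : ℂ)
    have U10 := (O_mul_o (k := 4) O10 oR2 (by norm_num)).const_mul_left (2 : ℂ)
    have U11 := (O_mul_O (k := 4) OC1c OC3 (by norm_num)).const_mul_left (1 : ℂ)
    have U12 := (O_mul_o (k := 4) OC1c oR2 (by norm_num)).const_mul_left (1 : ℂ)
    have U13 := (o_mul_O (k := 4) oR4 OC3 (by norm_num)).const_mul_left (1 : ℂ)
    have U14 := (o_mul_o (k := 4) oR4 oR2 (by norm_num)).const_mul_left (1 : ℂ)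
    have S := U1.add U2 |>.add U3 |>.add U4 |>.add U5 |>.add U6 |>.add U7 |>.add U8
      |>.add U9 |>.add U10 |>.add U11 |>.add U12 |>.add U13 |>.add U14
    refine S.congr (fun z => ?_) (fun z => rfl)
    obtain ⟨x, t⟩ := z
    linear_combination (-1 : ℂ) * heq2 (x, t)
  -- === extraction ===
  have hc0 : (2 * c : ℂ) = 0 := extract big1 0 (2 * c) (fun t => by ring)
  have hv1 : (2 * c + (6 * d + f₅) + (12 * e + 3 * f₆) : ℂ) = 0 :=
    extract big1 1 _ (fun t => by ring)
  have hvm1 : (2 * c - (6 * d + f₅) + (12 * e + 3 * f₆) : ℂ) = 0 :=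
    extract big1 (-1) _ (fun t => by ring)
  have hb0 : b = 0 := extract big2 0 b (fun t => by ring)
  refine ⟨hb0, ?_, ?_, ?_⟩
  · linear_combination hc0 / 2
  · linear_combination (hv1 - hvm1) / 12
  · linear_combination hv1 / 24 + hvm1 / 24 - hc0 / 12
end

section
/- Substituting x₁ + x₂ for P₂₂, −x₁x₂ for P₁₂, and (F(x₁,x₂) − 2y₁y₂)/(4(x₁−x₂)²) for P₁₁ into the determinant of the 4×4 matrix M of the genus-2 quartic relation makes det M vanish identically, given y₁² = f(x₁) and y₂² = f(x₂). -/
open Matrix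

/-- Baker's symmetric function `F(a,b)`. -/
def FvalC (f₀ f₁ f₂ f₃ f₄ f₅ f₆ a b : ℂ) : ℂ :=
  2 * f₀ + f₁ * (a + b) + 2 * f₂ * (a * b) + f₃ * (a * b) * (a + b)
    + 2 * f₄ * (a ^ 2 * b ^ 2) + f₅ * (a ^ 2 * b ^ 2) * (a + b) + 2 * f₆ * (a ^ 3 * b ^ 3)

private theorem myDetFinFour (M : Matrix (Fin 4) (Fin 4) ℂ) :
    M.det =
      M 0 0*M 1 1*M 2 2*M 3 3 - M 0 0*M 1 1*M 2 3*M 3 2 - M 0 0*M 1 2*M 2 1*M 3 3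
    + M 0 0*M 1 2*M 2 3*M 3 1 + M 0 0*M 1 3*M 2 1*M 3 2 - M 0 0*M 1 3*M 2 2*M 3 1
    - M 0 1*M 1 0*M 2 2*M 3 3 + M 0 1*M 1 0*M 2 3*M 3 2 + M 0 1*M 1 2*M 2 0*M 3 3
    - M 0 1*M 1 2*M 2 3*M 3 0 - M 0 1*M 1 3*M 2 0*M 3 2 + M 0 1*M 1 3*M 2 2*M 3 0
    + M 0 2*M 1 0*M 2 1*M 3 3 - M 0 2*M 1 0*M 2 3*M 3 1 - M 0 2*M 1 1*M 2 0*M 3 3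
    + M 0 2*M 1 1*M 2 3*M 3 0 + M 0 2*M 1 3*M 2 0*M 3 1 - M 0 2*M 1 3*M 2 1*M 3 0
    - M 0 3*M 1 0*M 2 1*M 3 2 + M 0 3*M 1 0*M 2 2*M 3 1 + M 0 3*M 1 1*M 2 0*M 3 2
    - M 0 3*M 1 1*M 2 2*M 3 0 - M 0 3*M 1 2*M 2 0*M 3 1 + M 0 3*M 1 2*M 2 1*M 3 0 := by
  simp [Matrix.det_succ_row_zero, Fin.sum_univ_succ,
    show Fin.succ (2 : Fin 3) = 3 from rfl, show Fin.castSucc (2 : Fin 3) = 2 from rfl,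
    show Fin.succAbove (2 : Fin 4) 2 = 3 from rfl, show Fin.succAbove (1 : Fin 4) 2 = 3 from rfl, show Fin.succAbove (3 : Fin 4) 2 = 2 from rfl]
  ring

set_option maxRecDepth 16000 in
set_option maxHeartbeats 2000000 in
theorem stmt9 (f₀ f₁ f₂ f₃ f₄ f₅ f₆ x₁ y₁ x₂ y₂ : ℂ)
    (hy₁ : y₁ ^ 2 = f₀ + f₁ * x₁ + f₂ * x₁ ^ 2 + f₃ * x₁ ^ 3 + f₄ * x₁ ^ 4 + f₅ * x₁ ^ 5
      + f₆ * x₁ ^ 6)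
    (hy₂ : y₂ ^ 2 = f₀ + f₁ * x₂ + f₂ * x₂ ^ 2 + f₃ * x₂ ^ 3 + f₄ * x₂ ^ 4 + f₅ * x₂ ^ 5
      + f₆ * x₂ ^ 6)
    (hx : x₁ ≠ x₂)
    (P₁₁ P₁₂ P₂₂ : ℂ)
    (hP₁₁ : P₁₁ = (FvalC f₀ f₁ f₂ f₃ f₄ f₅ f₆ x₁ x₂ - 2 * y₁ * y₂) / (4 * (x₁ - x₂) ^ 2))
    (hP₁₂ : P₁₂ = -(x₁ * x₂)) (hP₂₂ : P₂₂ = x₁ + x₂) :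
    (!![-f₀, f₁ / 2, 2 * P₁₁, -(2 * P₁₂);
        f₁ / 2, -f₂ - 4 * P₁₁ - f₆ * P₁₂ ^ 2,
          f₃ / 2 + (f₅ / 2) * P₁₂ + f₆ * P₁₂ * P₂₂, 2 * P₂₂;
        2 * P₁₁, f₃ / 2 + (f₅ / 2) * P₁₂ + f₆ * P₁₂ * P₂₂,
          -f₄ - f₅ * P₂₂ - f₆ * P₂₂ ^ 2, 2;
        -(2 * P₁₂), 2 * P₂₂, 2, 0] : Matrix (Fin 4) (Fin 4) ℂ).det = 0 := by
  have hd : x₁ - x₂ ≠ 0 := sub_ne_zero.mpr hx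
  have key : 4 * (x₁ - x₂) ^ 2 * P₁₁ = FvalC f₀ f₁ f₂ f₃ f₄ f₅ f₆ x₁ x₂ - 2 * y₁ * y₂ := by
    rw [hP₁₁]; field_simp
  subst hP₁₂ hP₂₂
  have hD : (4 * (x₁ - x₂) ^ 2) ^ 2 ≠ 0 := pow_ne_zero 2 (mul_ne_zero (by norm_num : (4:ℂ) ≠ 0) (pow_ne_zero 2 hd))
  refine mul_left_cancel₀ hD ?_
  rw [mul_zero]
  rw [myDetFinFour]
  simp only [Matrix.cons_val', Matrix.cons_val_zero, Matrix.cons_val_one, Matrix.head_cons,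
    Matrix.empty_val', Matrix.cons_val_fin_one, Matrix.head_fin_const, Matrix.of_apply,
    Matrix.cons_val_two, Matrix.cons_val_three, Matrix.vecHead, Matrix.vecTail,
    Function.comp_apply, Fin.succ_zero_eq_one, Fin.succ_one_eq_two]
  simp only [FvalC] at key
  linear_combination (16*(x₁-x₂)^2 * (4*(x₁-x₂)^2*P₁₁
      + (2 * f₀ + f₁ * (x₁ + x₂) + 2 * f₂ * (x₁ * x₂) + f₃ * (x₁ * x₂) * (x₁ + x₂)
        + 2 * f₄ * (x₁ ^ 2 * x₂ ^ 2) + f₅ * (x₁ ^ 2 * x₂ ^ 2) * (x₁ + x₂)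
        + 2 * f₆ * (x₁ ^ 3 * x₂ ^ 3)) - 2*y₁*y₂)
    - 32*(x₁-x₂)^2 * (2 * f₀ + f₁ * (x₁ + x₂) + 2 * f₂ * (x₁ * x₂) + f₃ * (x₁ * x₂) * (x₁ + x₂)
        + 2 * f₄ * (x₁ ^ 2 * x₂ ^ 2) + f₅ * (x₁ ^ 2 * x₂ ^ 2) * (x₁ + x₂)
        + 2 * f₆ * (x₁ ^ 3 * x₂ ^ 3))) * key
    + 64*(x₁-x₂)^2*y₂^2 * hy₁
    + 64*(x₁-x₂)^2*(f₀ + f₁*x₁ + f₂*x₁^2 + f₃*x₁^3 + f₄*x₁^4 + f₅*x₁^5 + f₆*x₁^6) * hy₂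
end

section
/- Let f be a polynomial of degree 5 or 6 with f(x₀) ≠ 0, u a branch of √f near x₀, and for t ≠ 0 small set x₁ = x₀, y₁ = −u(x₀), x₂ = x₀ + t, y₂ = u(x₀ + t). Then ξ₂₂ = x₁ + x₂ → 2x₀ and ξ₁₂ = −x₁x₂ → −x₀², while ξ₁₁ = (F(x₁,x₂) − 2y₁y₂)/(4(x₁−x₂)²) satisfies |ξ₁₁| → ∞ as t → 0. Consequently ξ₁₁ is not a ℂ-linear combination of 1, ξ₂₂, ξ₁₂ along this family. -/
open Filter

theorem stmt17 (f₀ f₁ f₂ f₃ f₄ f₅ f₆ : ℂ)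
    (hdeg : f₆ ≠ 0 ∨ (f₆ = 0 ∧ f₅ ≠ 0))
    (x₀ : ℂ)
    (hf : f₀ + f₁ * x₀ + f₂ * x₀ ^ 2 + f₃ * x₀ ^ 3 + f₄ * x₀ ^ 4 + f₅ * x₀ ^ 5
      + f₆ * x₀ ^ 6 ≠ 0)
    (r : ℝ) (hr : 0 < r) (u : ℂ → ℂ)
    (hu : DifferentiableOn ℂ u (Metric.ball x₀ r))
    (hsq : ∀ x ∈ Metric.ball x₀ r, (u x) ^ 2
      = f₀ + f₁ * x + f₂ * x ^ 2 + f₃ * x ^ 3 + f₄ * x ^ 4 + f₅ * x ^ 5 + f₆ * x ^ 6) :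
    let ξ22 : ℂ → ℂ := fun t => x₀ + (x₀ + t)
    let ξ12 : ℂ → ℂ := fun t => -(x₀ * (x₀ + t))
    let ξ11 : ℂ → ℂ := fun t =>
      (FvalC f₀ f₁ f₂ f₃ f₄ f₅ f₆ x₀ (x₀ + t) - 2 * (-u x₀) * u (x₀ + t)) / (4 * t ^ 2)
    Tendsto ξ22 (nhdsWithin (0 : ℂ) {0}ᶜ) (nhds (2 * x₀)) ∧
    Tendsto ξ12 (nhdsWithin (0 : ℂ) {0}ᶜ) (nhds (-x₀ ^ 2)) ∧
    Tendsto (fun t => ‖ξ11 t‖) (nhdsWithin (0 : ℂ) {0}ᶜ) atTop ∧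
    ¬ ∃ c₀ c₁ c₂ : ℂ, ∀ᶠ t in nhdsWithin (0 : ℂ) {0}ᶜ,
        ξ11 t = c₀ + c₁ * ξ22 t + c₂ * ξ12 t := by
  intro ξ22 ξ12 ξ11
  have hx0 : x₀ ∈ Metric.ball x₀ r := Metric.mem_ball_self hr
  have hcu : ContinuousAt u x₀ :=
    (hu.continuousOn.continuousAt (Metric.isOpen_ball.mem_nhds hx0))
  -- limit of ξ22
  have h22 : Tendsto ξ22 (nhdsWithin (0 : ℂ) {0}ᶜ) (nhds (2 * x₀)) := by
    have : Tendsto ξ22 (nhds (0 : ℂ)) (nhds (2 * x₀)) := by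
      have : ContinuousAt ξ22 0 := by fun_prop
      simpa [ξ22, two_mul] using this.tendsto
    exact this.mono_left nhdsWithin_le_nhds
  have h12 : Tendsto ξ12 (nhdsWithin (0 : ℂ) {0}ᶜ) (nhds (-x₀ ^ 2)) := by
    have : Tendsto ξ12 (nhds (0 : ℂ)) (nhds (-x₀ ^ 2)) := by
      have : ContinuousAt ξ12 0 := by fun_prop
      simpa [ξ12, sq] using this.tendsto
    exact this.mono_left nhdsWithin_le_nhds
  -- numerator
  set P : ℂ := f₀ + f₁ * x₀ + f₂ * x₀ ^ 2 + f₃ * x₀ ^ 3 + f₄ * x₀ ^ 4 + f₅ * x₀ ^ 5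
      + f₆ * x₀ ^ 6 with hP
  set N : ℂ → ℂ := fun t =>
    FvalC f₀ f₁ f₂ f₃ f₄ f₅ f₆ x₀ (x₀ + t) - 2 * (-u x₀) * u (x₀ + t) with hNdef
  have hNlim : Tendsto N (nhds (0 : ℂ)) (nhds (4 * P)) := by
    have hadd : Tendsto (fun t : ℂ => x₀ + t) (nhds 0) (nhds x₀) := by
      have : ContinuousAt (fun t : ℂ => x₀ + t) 0 := by fun_prop
      simpa using this.tendsto
    have huc : Tendsto (fun t : ℂ => u (x₀ + t)) (nhds 0) (nhds (u x₀)) :=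
      hcu.tendsto.comp hadd
    have hFc : Tendsto (fun t : ℂ => FvalC f₀ f₁ f₂ f₃ f₄ f₅ f₆ x₀ (x₀ + t)) (nhds 0)
        (nhds (FvalC f₀ f₁ f₂ f₃ f₄ f₅ f₆ x₀ x₀)) := by
      have : ContinuousAt (fun t : ℂ => FvalC f₀ f₁ f₂ f₃ f₄ f₅ f₆ x₀ (x₀ + t)) 0 := by
        unfold FvalC; fun_prop
      simpa using this.tendsto
    have := hFc.sub ((tendsto_const_nhds.mul huc : Tendsto (fun t : ℂ =>
      (2 * (-u x₀)) * u (x₀ + t)) (nhds 0) (nhds ((2 * (-u x₀)) * u x₀))))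
    have hval : FvalC f₀ f₁ f₂ f₃ f₄ f₅ f₆ x₀ x₀ - 2 * (-u x₀) * u x₀ = 4 * P := by
      have hs := hsq x₀ hx0
      unfold FvalC
      rw [hP]
      linear_combination 2 * hs
    rw [hval] at this
    exact this
  have hPnorm : (0 : ℝ) < ‖(4 : ℂ) * P‖ := by
    have : (4 : ℂ) * P ≠ 0 := mul_ne_zero (by norm_num) hf
    simpa [norm_pos_iff] using this
  have hNnorm : Tendsto (fun t => ‖N t‖) (nhdsWithin (0 : ℂ) {0}ᶜ) (nhds ‖(4 : ℂ) * P‖) :=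
    (hNlim.norm).mono_left nhdsWithin_le_nhds
  -- denominator
  have hDnorm : Tendsto (fun t : ℂ => ‖(4 : ℂ) * t ^ 2‖) (nhdsWithin (0 : ℂ) {0}ᶜ)
      (nhdsWithin (0 : ℝ) (Set.Ioi 0)) := by
    apply tendsto_nhdsWithin_iff.2
    constructor
    · have : Tendsto (fun t : ℂ => ‖(4 : ℂ) * t ^ 2‖) (nhds 0) (nhds ‖(4 : ℂ) * (0:ℂ) ^ 2‖) := by
        have : ContinuousAt (fun t : ℂ => ‖(4 : ℂ) * t ^ 2‖) 0 := by fun_prop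
        exact this.tendsto
      simpa using this.mono_left nhdsWithin_le_nhds
    · filter_upwards [self_mem_nhdsWithin] with t ht
      have ht' : t ≠ 0 := ht
      have : (4 : ℂ) * t ^ 2 ≠ 0 := mul_ne_zero (by norm_num) (pow_ne_zero _ ht')
      exact Set.mem_Ioi.mpr (norm_pos_iff.mpr this)
  have hinv : Tendsto (fun t : ℂ => (‖(4 : ℂ) * t ^ 2‖)⁻¹) (nhdsWithin (0 : ℂ) {0}ᶜ)
      atTop := tendsto_inv_nhdsGT_zero.comp hDnorm
  have h11 : Tendsto (fun t => ‖ξ11 t‖) (nhdsWithin (0 : ℂ) {0}ᶜ) atTop := by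
    have := hNnorm.pos_mul_atTop hPnorm hinv
    refine this.congr fun t => ?_
    simp [ξ11, N, norm_div, div_eq_mul_inv]
  refine ⟨h22, h12, h11, ?_⟩
  rintro ⟨c₀, c₁, c₂, hev⟩
  have hglim : Tendsto (fun t => c₀ + c₁ * ξ22 t + c₂ * ξ12 t) (nhdsWithin (0 : ℂ) {0}ᶜ)
      (nhds (c₀ + c₁ * (2 * x₀) + c₂ * (-x₀ ^ 2))) :=
    ((tendsto_const_nhds.add (tendsto_const_nhds.mul h22)).add (tendsto_const_nhds.mul h12))
  have hlim2 : Tendsto (fun t => ‖ξ11 t‖) (nhdsWithin (0 : ℂ) {0}ᶜ)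
      (nhds ‖c₀ + c₁ * (2 * x₀) + c₂ * (-x₀ ^ 2)‖) := by
    refine (hglim.norm).congr' ?_
    filter_upwards [hev] with t ht
    rw [ht]
  exact not_tendsto_atTop_of_tendsto_nhds hlim2 h11
end
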